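/- Let (𝔗, 𝒯) be a measurable space with 𝒯 complete with respect to a σ-finite positive measure, let H be a separable Hilbert space, let S : 𝔗 ⇉ H be a 𝒯-measurable multimapping whose values S(t) are all nonempty and R-prox-regular for some fixed R > 0, and let x : 𝔗 → H be a 𝒯-measurable selection of S. Then the multimapping t ↦ N_{S(t)}(x(t)) (the proximal normal cone to S(t) at x(t)) is 𝒯-measurable. -/

import Mathlib

open MeasureTheory Metric

variable {H : Type*} [NormedAddCommGroup H] [InnerProductSpace ℝ H]

/-- The set of nearest points of `S` to `y`. -/
def projSet (S : Set H) (y : H) : Set H := {x ∈ S | ∀ s ∈ S, dist y x ≤ dist y s}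

/-- The proximal normal cone to `S` at `x`. -/
def proxNormalCone (S : Set H) (x : H) : Set H :=
  {ς | ∃ η : ℝ, 0 < η ∧ x ∈ projSet S (x + η • ς)}

/-- `S` is `R`-prox-regular. -/
def IsProxRegular (R : ℝ) (S : Set H) : Prop :=
  ∀ x ∈ S, ∀ ς ∈ proxNormalCone S x, ‖ς‖ ≤ 1 →
    ∀ t : ℝ, 0 < t → t < R → x ∈ projSet S (x + t • ς)

/-!
For an `R`-prox-regular set `A` and `y ∈ A`, the proximal normal cone `N_A(y)` is the positive
cone over the closed convex set `K(A, y) = {ς : ‖ς‖ ≤ 1, R ⟪ς, s - y⟫ ≤ ‖s - y‖² for all s ∈ A}`.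
Hence `N_{S(t)}(x(t))` meets an open `U` iff `K(S(t), x(t))` meets one of countably many closed
balls lying in the open cone spanned by `U`.

Testing the defining inequality of `K(A, y)` only at the points `d m` of a dense sequence which
lie within `r k` of `A`, with a slack accounting for `r k`, describes `K(A, y)` as the zero set of
a penalty function. This function is weak-* continuous in `ς`, and it is measurable in `t` because
the events `S(t) ∩ B(d m, r k) ≠ ∅` are. Closed balls are weak-* compact, so `K(S(t), x(t))` meets
a ball iff the penalty takes arbitrarily small values on it, and by norm continuity this can be
tested on a countable dense subset of the ball.
-/

open Filter Topology Set
open scoped RealInnerProductSpace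

section Penalty

variable {ι X : Type*} [Encodable ι]

noncomputable def penalty (g : ι → X → ℝ) (x : X) : ℝ :=
  ∑' i, (1 / 2 : ℝ) ^ Encodable.encode i * min (max (g i x) 0) 1

lemma penalty_term_nonneg (g : ι → X → ℝ) (x : X) (i : ι) :
    0 ≤ (1 / 2 : ℝ) ^ Encodable.encode i * min (max (g i x) 0) 1 := by
  positivity

lemma penalty_term_le (g : ι → X → ℝ) (x : X) (i : ι) :
    (1 / 2 : ℝ) ^ Encodable.encode i * min (max (g i x) 0) 1 ≤ (1 / 2 : ℝ) ^ Encodable.encode i :=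
  mul_le_of_le_one_right (by positivity) (min_le_right _ _)

lemma summable_penalty_weight : Summable fun i : ι => (1 / 2 : ℝ) ^ Encodable.encode i :=
  summable_geometric_two.comp_injective Encodable.encode_injective

lemma summable_penalty_term (g : ι → X → ℝ) (x : X) :
    Summable fun i => (1 / 2 : ℝ) ^ Encodable.encode i * min (max (g i x) 0) 1 :=
  summable_penalty_weight.of_nonneg_of_le (penalty_term_nonneg g x) (penalty_term_le g x)

lemma penalty_nonneg (g : ι → X → ℝ) (x : X) : 0 ≤ penalty g x :=
  tsum_nonneg (penalty_term_nonneg g x)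

lemma penalty_eq_zero_iff {g : ι → X → ℝ} {x : X} : penalty g x = 0 ↔ ∀ i, g i x ≤ 0 := by
  rw [penalty, ← (summable_penalty_term g x).hasSum_iff,
    hasSum_zero_iff_of_nonneg (penalty_term_nonneg g x), funext_iff]
  refine forall_congr' fun i => ?_
  rw [Pi.zero_apply, mul_eq_zero_iff_left (by positivity)]
  grind

lemma continuous_penalty [TopologicalSpace X] {g : ι → X → ℝ} (hg : ∀ i, Continuous (g i)) :
    Continuous (penalty g) :=
  continuous_tsum
    (fun i => continuous_const.mul (((hg i).max continuous_const).min continuous_const))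
    summable_penalty_weight fun i x => by
      rw [Real.norm_of_nonneg (penalty_term_nonneg g x i)]
      exact penalty_term_le g x i

lemma measurable_penalty [MeasurableSpace X] {g : ι → X → ℝ} (hg : ∀ i, Measurable (g i)) :
    Measurable (penalty g) :=
  Measurable.tsum fun i => measurable_const.mul (((hg i).max measurable_const).min measurable_const)

end Penalty

lemma IsCompact.exists_eq_zero_iff_forall_exists_lt {X : Type*} [TopologicalSpace X] {K : Set X}
    (hK : IsCompact K) {G : X → ℝ} (hG : ContinuousOn G K) (hG0 : ∀ x ∈ K, 0 ≤ G x) :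
    (∃ x ∈ K, G x = 0) ↔ ∀ ε > 0, ∃ x ∈ K, G x < ε := by
  refine ⟨fun ⟨x, hxK, hx⟩ ε hε => ⟨x, hxK, hx ▸ hε⟩, fun h => ?_⟩
  obtain ⟨x₀, hx₀K, -⟩ := h 1 one_pos
  obtain ⟨x, hxK, hmin⟩ := hK.exists_isMinOn ⟨x₀, hx₀K⟩ hG
  refine ⟨x, hxK, le_antisymm (le_of_forall_pos_le_add fun ε hε => ?_) (hG0 x hxK)⟩
  obtain ⟨z, hzK, hz⟩ := h ε hε
  linarith [isMinOn_iff.1 hmin z hzK]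

lemma measurableSet_setOf_forall_exists_lt {𝔗 X : Type*} [MeasurableSpace 𝔗] [PseudoMetricSpace X]
    [TopologicalSpace.SeparableSpace X] (K : Set X) {F : 𝔗 → X → ℝ}
    (hFc : ∀ t, Continuous (F t)) (hFm : ∀ x, Measurable fun t => F t x) :
    MeasurableSet {t | ∀ ε > 0, ∃ x ∈ K, F t x < ε} := by
  obtain ⟨D, hDK, hD, hKD⟩ :=
    (TopologicalSpace.IsSeparable.of_separableSpace K).exists_countable_dense_subset
  have hset : {t | ∀ ε > 0, ∃ x ∈ K, F t x < ε} =
      ⋂ k : ℕ, ⋃ x ∈ D, {t | F t x < 1 / (k + 1)} := by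
    ext t
    simp only [mem_ofPred_eq, mem_iInter, mem_iUnion, exists_prop]
    constructor
    · intro h k
      obtain ⟨x, hxK, hx⟩ := h _ Nat.one_div_pos_of_nat
      obtain ⟨z, hz, hzD⟩ :=
        mem_closure_iff.1 (hKD hxK) _ (isOpen_lt (hFc t) continuous_const) hx
      exact ⟨z, hzD, hz⟩
    · intro h ε hε
      obtain ⟨k, hk⟩ := exists_nat_one_div_lt hε
      obtain ⟨x, hxD, hx⟩ := h k
      exact ⟨x, hDK hxD, hx.trans hk⟩
  rw [hset]
  exact .iInter fun k => .biUnion hD fun x _ => measurableSet_lt (hFm x) measurable_const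

lemma DenseRange.exists_closedBall_subset {X : Type*} [PseudoMetricSpace X] {d : ℕ → X}
    (hd : DenseRange d) {V : Set X} (hV : IsOpen V) {x : X} (hx : x ∈ V) :
    ∃ i k : ℕ, x ∈ closedBall (d i) (1 / (k + 1)) ∧ closedBall (d i) (1 / (k + 1)) ⊆ V := by
  obtain ⟨ε, hε, hball⟩ := Metric.isOpen_iff.1 hV x hx
  obtain ⟨k, hk⟩ := exists_nat_one_div_lt (half_pos hε)
  obtain ⟨i, hi⟩ := hd.exists_dist_lt x (Nat.one_div_pos_of_nat (α := ℝ) (n := k))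
  refine ⟨i, k, mem_closedBall.2 hi.le, fun z hz => hball (mem_ball.2 ?_)⟩
  calc dist z x ≤ dist z (d i) + dist x (d i) := dist_triangle_right _ _ _
    _ < ε := by linarith [mem_closedBall.1 hz]

lemma isOpen_setOf_exists_pos_smul_mem {E : Type*} [TopologicalSpace E] [SMul ℝ E]
    [ContinuousConstSMul ℝ E] {U : Set E} (hU : IsOpen U) :
    IsOpen {v : E | ∃ l > (0 : ℝ), l • v ∈ U} := by
  have : {v : E | ∃ l > (0 : ℝ), l • v ∈ U} = ⋃ l > (0 : ℝ), (l • ·) ⁻¹' U := by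
    ext; simp
  rw [this]
  exact isOpen_biUnion fun l _ => hU.preimage (continuous_const_smul l)

section Normals

def ProxNormalIneq (R : ℝ) (A : Set H) (y ς : H) : Prop :=
  ∀ s ∈ A, R * ⟪ς, s - y⟫ ≤ ‖s - y‖ ^ 2

lemma dist_add_smul_le_dist_iff (y ς s : H) (τ : ℝ) :
    dist (y + τ • ς) y ≤ dist (y + τ • ς) s ↔ 2 * τ * ⟪ς, s - y⟫ ≤ ‖s - y‖ ^ 2 := by
  have hs : y + τ • ς - s = τ • ς - (s - y) := by abel
  rw [dist_eq_norm, dist_eq_norm, ← sq_le_sq₀ (norm_nonneg _) (norm_nonneg _), hs,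
    add_sub_cancel_left, norm_sub_sq_real, real_inner_smul_left]
  constructor <;> intro h <;> linarith

lemma mem_projSet_add_half_smul_iff {R : ℝ} {A : Set H} {y : H} (hy : y ∈ A) (ς : H) :
    y ∈ projSet A (y + (R / 2) • ς) ↔ ProxNormalIneq R A y ς := by
  simp only [projSet, mem_ofPred_eq, hy, true_and, dist_add_smul_le_dist_iff, ProxNormalIneq]
  ring_nf

lemma smul_mem_proxNormalCone {A : Set H} {y ς : H} (hς : ς ∈ proxNormalCone A y) {c : ℝ}
    (hc : 0 < c) : c • ς ∈ proxNormalCone A y := by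
  obtain ⟨η, hη, hproj⟩ := hς
  exact ⟨η / c, div_pos hη hc, by rwa [smul_smul, div_mul_cancel₀ _ hc.ne']⟩

lemma proxNormalCone_inter_nonempty_iff {R : ℝ} (hR : 0 < R) {A : Set H} (hA : IsProxRegular R A)
    {y : H} (hy : y ∈ A) (U : Set H) :
    (proxNormalCone A y ∩ U).Nonempty ↔
      ∃ ς, ‖ς‖ ≤ 1 ∧ ProxNormalIneq R A y ς ∧ ∃ l > (0 : ℝ), l • ς ∈ U := by
  constructor
  · rintro ⟨ς₀, hN, hU⟩
    set c := max 1 ‖ς₀‖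
    have hc : 0 < c := lt_max_of_lt_left one_pos
    have hnorm : ‖c⁻¹ • ς₀‖ ≤ 1 := by
      rw [norm_smul, norm_inv, Real.norm_of_nonneg hc.le, inv_mul_le_iff₀ hc, mul_one]
      exact le_max_right _ _
    have hproj := hA y hy _ (smul_mem_proxNormalCone hN (inv_pos.2 hc)) hnorm (R / 2)
      (half_pos hR) (half_lt_self hR)
    exact ⟨c⁻¹ • ς₀, hnorm, (mem_projSet_add_half_smul_iff hy _).1 hproj, c, hc,
      by rwa [smul_inv_smul₀ hc.ne']⟩
  · rintro ⟨ς, -, hς, l, hl, hU⟩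
    exact ⟨l • ς, smul_mem_proxNormalCone
      ⟨R / 2, half_pos hR, (mem_projSet_add_half_smul_iff hy ς).2 hς⟩ hl, hU⟩

lemma inner_le_inner_add_norm_sub {ς : H} (hς : ‖ς‖ ≤ 1) (a b : H) :
    ⟪ς, a⟫ ≤ ⟪ς, b⟫ + ‖a - b‖ := by
  have h := real_inner_le_norm ς (a - b)
  rw [inner_sub_right] at h
  nlinarith [norm_nonneg (a - b)]

end Normals

section Constraints

variable (R : ℝ) (d : ℕ → H) (r : ℕ → ℝ)

/-- The constraint indexed by `(m, k)` tests `ProxNormalIneq` at `d m`, which stands for the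
points of `A` in `ball (d m) (r k)`, whence the slack. It is only imposed when that ball meets `A`;
for `A = S t` this event is measurable in `t`. -/
noncomputable def proxConstraint (A : Set H) (y : H) (p : ℕ × ℕ) (φ : WeakDual ℝ H) : ℝ :=
  open scoped Classical in
  if (A ∩ ball (d p.1) (r p.2)).Nonempty then
    R * φ (d p.1 - y) - ((‖d p.1 - y‖ + r p.2) ^ 2 + R * r p.2)
  else 0

lemma continuous_proxConstraint (A : Set H) (y : H) (p : ℕ × ℕ) :
    Continuous (proxConstraint R d r A y p) := by
  unfold proxConstraint
  split_ifs
  · exact (continuous_const.mul (WeakDual.eval_continuous _)).sub continuous_const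
  · exact continuous_const

lemma measurable_proxConstraint [MeasurableSpace H] [OpensMeasurableSpace H]
    {𝔗 : Type*} [MeasurableSpace 𝔗] {S : 𝔗 → Set H}
    (hS : ∀ U : Set H, IsOpen U → MeasurableSet {t | (S t ∩ U).Nonempty})
    {x : 𝔗 → H} (hx : Measurable x) (p : ℕ × ℕ) (φ : WeakDual ℝ H) :
    Measurable fun t => proxConstraint R d r (S t) (x t) p φ := by
  unfold proxConstraint
  have hc : Continuous fun z => R * φ (d p.1 - z) - ((‖d p.1 - z‖ + r p.2) ^ 2 + R * r p.2) := by
    fun_prop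
  exact Measurable.ite (hS _ isOpen_ball) (hc.measurable.comp hx) measurable_const

end Constraints

section WeakDual

variable [CompleteSpace H]

noncomputable def innerToWeakDual (ς : H) : WeakDual ℝ H :=
  StrongDual.toWeakDual (InnerProductSpace.toDual ℝ H ς)

@[simp]
lemma innerToWeakDual_apply (ς z : H) : innerToWeakDual ς z = ⟪ς, z⟫ :=
  InnerProductSpace.toDual_apply_apply

lemma continuous_innerToWeakDual : Continuous (innerToWeakDual : H → WeakDual ℝ H) :=
  NormedSpace.Dual.toWeakDual_continuous.comp (InnerProductSpace.toDual ℝ H).continuous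

lemma innerToWeakDual_injective : Function.Injective (innerToWeakDual : H → WeakDual ℝ H) :=
  StrongDual.toWeakDual.injective.comp (InnerProductSpace.toDual ℝ H).injective

lemma isCompact_image_innerToWeakDual_closedBall (c : H) (ρ : ℝ) :
    IsCompact (innerToWeakDual '' closedBall c ρ) := by
  have : innerToWeakDual '' closedBall c ρ =
      WeakDual.toStrongDual ⁻¹' closedBall (InnerProductSpace.toDual ℝ H c) ρ := by
    have : (innerToWeakDual : H → WeakDual ℝ H) =
        StrongDual.toWeakDual ∘ InnerProductSpace.toDual ℝ H := rfl
    rw [this, image_comp, LinearIsometryEquiv.image_closedBall,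
      LinearEquiv.image_eq_preimage_symm]
    rfl
  rw [this]
  exact WeakDual.isCompact_closedBall _ ρ

variable {R : ℝ} {d : ℕ → H} {r : ℕ → ℝ}

lemma proxNormalIneq_iff_forall_proxConstraint_nonpos (hR : 0 ≤ R) (hd : DenseRange d)
    (hr0 : ∀ k, 0 < r k) (hr : Tendsto r atTop (𝓝 0)) {A : Set H} {y ς : H} (hς : ‖ς‖ ≤ 1) :
    ProxNormalIneq R A y ς ↔ ∀ p, proxConstraint R d r A y p (innerToWeakDual ς) ≤ 0 := by
  simp only [proxConstraint, innerToWeakDual_apply]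
  constructor
  · rintro h ⟨m, k⟩
    dsimp only
    split_ifs with hact
    · obtain ⟨s, hsA, hsm⟩ := hact
      rw [mem_ball, dist_eq_norm] at hsm
      have hinner := inner_le_inner_add_norm_sub hς (d m - y) (s - y)
      have hnorm := norm_le_norm_add_norm_sub' (s - y) (d m - y)
      rw [sub_sub_sub_cancel_right] at hinner hnorm
      rw [norm_sub_rev] at hinner
      have hsq : ‖s - y‖ ^ 2 ≤ (‖d m - y‖ + r k) ^ 2 :=
        pow_le_pow_left₀ (norm_nonneg _) (by linarith) 2
      have hR_inner := mul_le_mul_of_nonneg_left (hinner.trans (add_le_add_right hsm.le _)) hR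
      linarith [h s hsA]
    · exact le_rfl
  · intro h s hsA
    have hk : ∀ k, R * ⟪ς, s - y⟫ ≤ (‖s - y‖ + 2 * r k) ^ 2 + 2 * R * r k := by
      intro k
      obtain ⟨m, hm⟩ := hd.exists_dist_lt s (hr0 k)
      have hc := h (m, k)
      rw [if_pos ⟨s, hsA, hm⟩] at hc
      dsimp only at hc
      rw [dist_eq_norm] at hm
      have hinner := inner_le_inner_add_norm_sub hς (s - y) (d m - y)
      have hnorm := norm_le_norm_add_norm_sub' (d m - y) (s - y)
      rw [sub_sub_sub_cancel_right] at hinner hnorm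
      rw [norm_sub_rev (d m) s] at hnorm
      have hsq : (‖d m - y‖ + r k) ^ 2 ≤ (‖s - y‖ + 2 * r k) ^ 2 :=
        pow_le_pow_left₀ (add_nonneg (norm_nonneg _) (hr0 k).le) (by linarith) 2
      have hR_inner := mul_le_mul_of_nonneg_left (hinner.trans (add_le_add_right hm.le _)) hR
      linarith
    have hlim : Tendsto (fun k => (‖s - y‖ + 2 * r k) ^ 2 + 2 * R * r k) atTop
        (𝓝 (‖s - y‖ ^ 2)) := by
      simpa using ((tendsto_const_nhds.add (hr.const_mul 2)).pow 2).add (hr.const_mul (2 * R))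
    exact ge_of_tendsto' hlim hk

lemma measurableSet_setOf_exists_proxNormalIneq [TopologicalSpace.SeparableSpace H]
    [MeasurableSpace H] [OpensMeasurableSpace H] {𝔗 : Type*} [MeasurableSpace 𝔗] (hR : 0 ≤ R)
    {S : 𝔗 → Set H}
    (hS : ∀ U : Set H, IsOpen U → MeasurableSet {t | (S t ∩ U).Nonempty})
    {x : 𝔗 → H} (hx : Measurable x) (c : H) (ρ : ℝ) :
    MeasurableSet {t | ∃ ς ∈ closedBall c ρ ∩ closedBall 0 1, ProxNormalIneq R (S t) (x t) ς} := by
  set B := closedBall c ρ ∩ closedBall (0 : H) 1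
  set d := TopologicalSpace.denseSeq H
  set P : 𝔗 → WeakDual ℝ H → ℝ := fun t =>
    penalty (proxConstraint R d (fun k : ℕ => 1 / (k + 1)) (S t) (x t))
  have hPc : ∀ t, Continuous (P t) := fun t =>
    continuous_penalty (continuous_proxConstraint _ _ _ _ _)
  have hB : IsCompact (innerToWeakDual '' B) := by
    rw [image_inter innerToWeakDual_injective]
    exact (isCompact_image_innerToWeakDual_closedBall c ρ).inter
      (isCompact_image_innerToWeakDual_closedBall 0 1)
  have hzero : ∀ t, (∃ ς ∈ B, ProxNormalIneq R (S t) (x t) ς) ↔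
      ∀ ε > 0, ∃ ς ∈ B, P t (innerToWeakDual ς) < ε := by
    intro t
    have := hB.exists_eq_zero_iff_forall_exists_lt (hPc t).continuousOn
      fun φ _ => penalty_nonneg _ φ
    simp only [exists_mem_image] at this
    rw [← this]
    refine exists_congr fun ς => and_congr_right fun hς => ?_
    rw [penalty_eq_zero_iff, proxNormalIneq_iff_forall_proxConstraint_nonpos hR
      (TopologicalSpace.denseRange_denseSeq H) (fun _ => Nat.one_div_pos_of_nat)
      tendsto_one_div_add_atTop_nhds_zero_nat (mem_closedBall_zero_iff.1 hς.2)]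
  simp only [hzero]
  exact measurableSet_setOf_forall_exists_lt B (fun t => (hPc t).comp continuous_innerToWeakDual)
    fun ς => measurable_penalty fun p => measurable_proxConstraint _ _ _ hS hx p _

end WeakDual

theorem stmt6_general {𝔗 : Type*} [MeasurableSpace 𝔗]
    [SecondCountableTopology H] [MeasurableSpace H] [BorelSpace H] [CompleteSpace H]
    (R : ℝ) (hR : 0 < R) (S : 𝔗 → Set H)
    (hprox : ∀ t, IsProxRegular R (S t))
    (hmeas : ∀ U : Set H, IsOpen U → MeasurableSet {t | (S t ∩ U).Nonempty})
    (x : 𝔗 → H) (hx : Measurable x) (hxsel : ∀ t, x t ∈ S t) :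
    ∀ U : Set H, IsOpen U →
      MeasurableSet {t | (proxNormalCone (S t) (x t) ∩ U).Nonempty} := by
  intro U hU
  set d := TopologicalSpace.denseSeq H
  set V := {ς : H | ∃ l > (0 : ℝ), l • ς ∈ U}
  have hV : IsOpen V := isOpen_setOf_exists_pos_smul_mem hU
  have hset : {t | (proxNormalCone (S t) (x t) ∩ U).Nonempty} =
      ⋃ p ∈ {p : ℕ × ℕ | closedBall (d p.1) (1 / (p.2 + 1)) ⊆ V},
        {t | ∃ ς ∈ closedBall (d p.1) (1 / (p.2 + 1)) ∩ closedBall 0 1,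
          ProxNormalIneq R (S t) (x t) ς} := by
    ext t
    simp only [mem_ofPred_eq, mem_iUnion, exists_prop,
      proxNormalCone_inter_nonempty_iff hR (hprox t) (hxsel t), mem_inter_iff,
      mem_closedBall_zero_iff]
    constructor
    · rintro ⟨ς, hς1, hς, hςV⟩
      obtain ⟨i, k, hmem, hsub⟩ :=
        (TopologicalSpace.denseRange_denseSeq H).exists_closedBall_subset hV hςV
      exact ⟨(i, k), hsub, ς, ⟨hmem, hς1⟩, hς⟩
    · rintro ⟨p, hsub, ς, ⟨hmem, hς1⟩, hς⟩
      exact ⟨ς, hς1, hς, hsub hmem⟩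
  rw [hset]
  exact .biUnion (to_countable _) fun p _ =>
    measurableSet_setOf_exists_proxNormalIneq hR.le hmeas hx _ _

theorem stmt6 {𝔗 : Type*} [MeasurableSpace 𝔗] (μ : Measure 𝔗) [SigmaFinite μ]
    (hcomp : μ.IsComplete)
    [SecondCountableTopology H] [MeasurableSpace H] [BorelSpace H] [CompleteSpace H]
    (R : ℝ) (hR : 0 < R) (S : 𝔗 → Set H)
    (hne : ∀ t, (S t).Nonempty) (hcls : ∀ t, IsClosed (S t))
    (hprox : ∀ t, IsProxRegular R (S t))
    (hmeas : ∀ U : Set H, IsOpen U → MeasurableSet {t | (S t ∩ U).Nonempty})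
    (x : 𝔗 → H) (hx : Measurable x) (hxsel : ∀ t, x t ∈ S t) :
    ∀ U : Set H, IsOpen U →
      MeasurableSet {t | (proxNormalCone (S t) (x t) ∩ U).Nonempty} :=
  stmt6_general R hR S hprox hmeas x hx hxsel
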